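/- Let A : D(A) ⊆ H → H be a linear monotone operator and λ₀ > 0 such that I + λ₀A is surjective onto H. Then for every λ > λ₀/2, the operator I + λA is surjective onto H. -/
import Mathlib


open RealInnerProductSpace

theorem stmt_12 {H : Type*} [NormedAddCommGroup H] [InnerProductSpace ℝ H]
    [CompleteSpace H] (D : Submodule ℝ H) (A : D →ₗ[ℝ] H)
    (hmono : ∀ u : D, 0 ≤ ⟪A u, (u : H)⟫)
    (lam₀ : ℝ) (hlam₀ : 0 < lam₀)
    (hsurj₀ : ∀ f : H, ∃ u : D, (u : H) + lam₀ • A u = f) :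
    ∀ lam : ℝ, lam > lam₀ / 2 →
      ∀ f : H, ∃ u : D, (u : H) + lam • A u = f := by
  intro lam hlam f
  have hlam' : 0 < lam := lt_trans (by positivity) hlam
  choose sol hsol using hsurj₀
  -- the resolvent is nonexpansive
  have key : ∀ g₁ g₂ : H, ‖(sol g₁ : H) - (sol g₂ : H)‖ ≤ ‖g₁ - g₂‖ := by
    intro g₁ g₂
    set u : D := sol g₁ - sol g₂ with hu
    have hcoe : (u : H) = (sol g₁ : H) - (sol g₂ : H) := by simp [hu]
    have heq : (u : H) + lam₀ • A u = g₁ - g₂ := by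
      have h3 : g₁ - g₂ = ((sol g₁ : H) + lam₀ • A (sol g₁)) - ((sol g₂ : H) + lam₀ • A (sol g₂)) := by
        rw [hsol g₁, hsol g₂]
      rw [h3, hu]
      simp only [map_sub, Submodule.coe_sub, smul_sub]
      abel
    rw [← hcoe]
    have hineq : ‖(u : H)‖ ^ 2 ≤ ⟪g₁ - g₂, (u : H)⟫ := by
      rw [← heq]
      rw [inner_add_left, real_inner_smul_left, real_inner_self_eq_norm_sq]
      have := hmono u
      nlinarith [real_inner_comm (A u : H) (u : H)]
    have h2 : ⟪g₁ - g₂, (u : H)⟫ ≤ ‖g₁ - g₂‖ * ‖(u : H)‖ := real_inner_le_norm _ _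
    rcases eq_or_lt_of_le (norm_nonneg ((u : H))) with h0 | h0
    · rw [← h0]; positivity
    · have : ‖(u : H)‖ ^ 2 ≤ ‖g₁ - g₂‖ * ‖(u : H)‖ := le_trans hineq h2
      nlinarith
  -- the contraction
  set c : ℝ := 1 - lam₀ / lam with hc
  have hcabs : |c| < 1 := by
    rw [abs_lt]
    constructor
    · have : lam₀ / lam < 2 := by
        rw [div_lt_iff₀ hlam']; linarith
      simp only [hc]; linarith
    · have : 0 < lam₀ / lam := by positivity
      simp only [hc]; linarith
  set Φ : H → H := fun v => ((sol ((lam₀ / lam) • f + c • v) : H)) with hΦ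
  have hlip : LipschitzWith ⟨|c|, abs_nonneg c⟩ Φ := by
    apply LipschitzWith.of_dist_le_mul
    intro v₁ v₂
    simp only [hΦ, dist_eq_norm]
    calc ‖(sol ((lam₀ / lam) • f + c • v₁) : H) - (sol ((lam₀ / lam) • f + c • v₂) : H)‖
        ≤ ‖((lam₀ / lam) • f + c • v₁) - ((lam₀ / lam) • f + c • v₂)‖ := key _ _
      _ = |c| * ‖v₁ - v₂‖ := by
          rw [add_sub_add_left_eq_sub, ← smul_sub, norm_smul, Real.norm_eq_abs]
  have hcontr : ContractingWith ⟨|c|, abs_nonneg c⟩ Φ := by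
    refine ⟨?_, hlip⟩
    exact_mod_cast hcabs
  obtain ⟨x, hx, -⟩ := hcontr.exists_fixedPoint f (by simp [edist_ne_top])
  set w : D := sol ((lam₀ / lam) • f + c • x) with hw
  have hwx : (w : H) = x := hx
  refine ⟨w, ?_⟩
  have h := hsol ((lam₀ / lam) • f + c • x)
  rw [← hw, hwx] at h
  -- h : x + lam₀ • A w = (lam₀/lam) • f + c • x
  have hA : lam • A w = f - x := by
    have h' : lam₀ • A w = (lam₀ / lam) • f - (lam₀ / lam) • x := by
      have : lam₀ • A w = (lam₀ / lam) • f + c • x - x := by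
        rw [← h]; abel
      rw [this, hc]
      rw [sub_smul, one_smul]; abel
    have h'' : (lam / lam₀) • (lam₀ • A w) = (lam / lam₀) • ((lam₀ / lam) • f - (lam₀ / lam) • x) := by
      rw [h']
    rw [smul_smul, smul_sub, smul_smul, smul_smul] at h''
    have e1 : lam / lam₀ * lam₀ = lam := by field_simp
    have e2 : lam / lam₀ * (lam₀ / lam) = 1 := by field_simp
    rw [e1, e2, one_smul, one_smul] at h''
    exact h''
  rw [hwx, hA]; abel
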